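/- Let G = (V,E) be a graph on at least 4 vertices admitting a spanning forest F with |F| ≥ 3, and let P be the maximum weight forest polytope of G. Then any circuit walk in P from the zero vector to X(F) has length at least 3; hence the circuit diameter of P is at least 3. -/

import Mathlib

/-!
A circuit step from the origin is a nonnegative circuit, and a nonnegative vector `g` with two
support edges `e ≠ f` is never a circuit: the unit vector of `f` has its row support inside that
of `g` without being proportional to `g`. So one step from `0` ends at `c • unitVec e₁` with
`c ≤ 1`. The same test shows that `χ(F) - c • unitVec e₁` (for `c < 2`, including `χ(F)` itself)
is not a circuit direction, using an edge `f ∈ F` such that every vertex set containing `f` and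
`e₁` contains a second edge of `F`: all rows through `f` then have positive value. This edge comes
from `|F| ≥ 3` when `e₁ ∈ F`, and from the `F`-path joining the endpoints of `e₁` otherwise.
Hence no walk with at most two steps leads from `0` to `χ(F)`.
-/

/-- The row of the rank-inequality matrix indexed by `U ⊆ V`, applied to `g`:
`∑_{e ∈ E(G[U])} g(e)`. -/
def rowSum {V : Type*} [Fintype V] [DecidableEq V] (G : SimpleGraph V) [DecidableRel G.Adj]
    (g : G.edgeSet → ℝ) (U : Finset V) : ℝ :=
  ∑ e : G.edgeSet, if ∀ v ∈ (e : Sym2 V), v ∈ U then g e else 0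

/-- The support of `B g` for the rank-inequality matrix `B`: the nonempty sets `U` whose
rank row evaluates to a nonzero value on `g`. -/
def Bsupp {V : Type*} [Fintype V] [DecidableEq V] (G : SimpleGraph V) [DecidableRel G.Adj]
    (g : G.edgeSet → ℝ) : Set (Finset V) :=
  {U | U.Nonempty ∧ rowSum G g U ≠ 0}

/-- A circuit of the rank-inequality system: a nonzero vector `g` such that `B g` is
support-minimal over `{B x : x ≠ 0}`. -/
def IsCircuit {V : Type*} [Fintype V] [DecidableEq V] (G : SimpleGraph V) [DecidableRel G.Adj]
    (g : G.edgeSet → ℝ) : Prop :=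
  g ≠ 0 ∧ ∀ y : G.edgeSet → ℝ, y ≠ 0 → ¬ Bsupp G y ⊂ Bsupp G g

/-- The unit vector supported on the edge `e`. -/
def unitVec {V : Type*} [DecidableEq V] (G : SimpleGraph V) (e : G.edgeSet) :
    G.edgeSet → ℝ :=
  fun f => if f = e then 1 else 0

/-- The spanning subgraph of `G` with edge set `R`. -/
def edgeSub {V : Type*} (G : SimpleGraph V) (R : Set G.edgeSet) : SimpleGraph V where
  Adj u v := u ≠ v ∧ ∃ e ∈ R, (e : Sym2 V) = s(u, v)
  symm := ⟨by
    rintro u v ⟨huv, e, heR, he⟩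
    exact ⟨huv.symm, e, heR, by rw [he, Sym2.eq_swap]⟩⟩
  loopless := ⟨by rintro v ⟨hv, _⟩; exact hv rfl⟩

/-- The maximum weight forest polytope of `G`. -/
def MWF {V : Type*} [Fintype V] [DecidableEq V] (G : SimpleGraph V) [DecidableRel G.Adj] :
    Set (G.edgeSet → ℝ) :=
  {x | (∀ e, 0 ≤ x e) ∧ ∀ U : Finset V, U.Nonempty → rowSum G x U ≤ (U.card : ℝ) - 1}

/-- The characteristic vector of an edge set `F`. -/
def chiVec {V : Type*} [DecidableEq V] (G : SimpleGraph V) (F : Finset G.edgeSet) :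
    G.edgeSet → ℝ :=
  fun e => if e ∈ F then 1 else 0

/-- A maximal step of a circuit walk in the maximum weight forest polytope. -/
def IsMaxStep {V : Type*} [Fintype V] [DecidableEq V] (G : SimpleGraph V)
    [DecidableRel G.Adj] (x x' : G.edgeSet → ℝ) : Prop :=
  ∃ (gdir : G.edgeSet → ℝ) (eps : ℝ), IsCircuit G gdir ∧ 0 < eps ∧
    x' = x + eps • gdir ∧ ∀ eps' : ℝ, eps < eps' → x + eps' • gdir ∉ MWF G

/-- A circuit walk in the maximum weight forest polytope. -/
def IsCircuitWalk {V : Type*} [Fintype V] [DecidableEq V] (G : SimpleGraph V)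
    [DecidableRel G.Adj] (k : ℕ) (x : Fin (k + 1) → G.edgeSet → ℝ) : Prop :=
  (∀ i, x i ∈ MWF G) ∧ ∀ i : Fin k, IsMaxStep G (x i.castSucc) (x i.succ)

open Finset

lemma SimpleGraph.Reachable.exists_adj_adj_of_not_adj {V : Type*} {H : SimpleGraph V}
    {u v : V} (hr : H.Reachable u v) (huv : u ≠ v) (hnadj : ¬H.Adj u v) :
    ∃ b c, u ≠ c ∧ H.Adj u b ∧ H.Adj b c := by
  obtain ⟨p, hp⟩ := hr.exists_isPath
  match p, hp with
  | .nil, _ => exact absurd rfl huv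
  | .cons h .nil, _ => exact absurd h hnadj
  | .cons h (.cons h' q), hp =>
    refine ⟨_, _, fun huc => ?_, h, h'⟩
    subst huc
    exact (SimpleGraph.Walk.cons_isPath_iff _ _).mp hp |>.2 (by simp)

section

variable {V : Type*} [Fintype V] [DecidableEq V] {G : SimpleGraph V} [DecidableRel G.Adj]

lemma rowSum_sub (a b : G.edgeSet → ℝ) (U : Finset V) :
    rowSum G (a - b) U = rowSum G a U - rowSum G b U := by
  simp only [rowSum, Pi.sub_apply, ← sum_sub_distrib, ite_sub_ite, sub_zero]

lemma rowSum_smul (c : ℝ) (a : G.edgeSet → ℝ) (U : Finset V) :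
    rowSum G (c • a) U = c * rowSum G a U := by
  simp only [rowSum, Pi.smul_apply, smul_eq_mul, mul_sum, mul_ite, mul_zero]

lemma rowSum_unitVec (e : G.edgeSet) (U : Finset V) :
    rowSum G (unitVec G e) U = if ∀ v ∈ (e : Sym2 V), v ∈ U then 1 else 0 := by
  rw [rowSum, sum_eq_single_of_mem e (mem_univ e) fun f _ hf => by simp [unitVec, hf]]
  simp [unitVec]

lemma rowSum_chiVec (F : Finset G.edgeSet) (U : Finset V) :
    rowSum G (chiVec G F) U = #{e ∈ F | ∀ v ∈ e.1, v ∈ U} := by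
  simp only [rowSum, chiVec, ← ite_and, and_comm, sum_boole]
  congr 2
  ext e
  simp

lemma bsupp_smul {c : ℝ} (hc : c ≠ 0) (g : G.edgeSet → ℝ) : Bsupp G (c • g) = Bsupp G g := by
  ext U
  simp [Bsupp, rowSum_smul, hc]

lemma IsCircuit.smul {g : G.edgeSet → ℝ} (hg : IsCircuit G g) {c : ℝ} (hc : c ≠ 0) :
    IsCircuit G (c • g) :=
  ⟨smul_ne_zero hc hg.1, by simpa only [bsupp_smul hc] using hg.2⟩

lemma IsMaxStep.isCircuit_sub {x x' : G.edgeSet → ℝ} (h : IsMaxStep G x x') :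
    IsCircuit G (x' - x) := by
  obtain ⟨g, eps, hg, heps, rfl, -⟩ := h
  rw [add_sub_cancel_left]
  exact hg.smul heps.ne'

lemma IsCircuitWalk.isCircuit_sub {k : ℕ} {x : Fin (k + 1) → G.edgeSet → ℝ}
    (h : IsCircuitWalk G k x) (i : Fin k) : IsCircuit G (x i.succ - x i.castSucc) :=
  (h.2 i).isCircuit_sub

lemma not_isCircuit_of_bsupp_subset {g y : G.edgeSet → ℝ} (hsub : Bsupp G y ⊆ Bsupp G g)
    (hy : ∀ c : ℝ, y ≠ c • g) (hg : (Bsupp G g).Nonempty) : ¬IsCircuit G g := by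
  rintro ⟨-, hmin⟩
  obtain ⟨U₀, hU₀, hgU₀⟩ := hg
  -- `y - c • g` keeps the support inside that of `g` and loses the row `U₀`.
  set c := rowSum G y U₀ / rowSum G g U₀
  have hrow : ∀ U, rowSum G (y - c • g) U = rowSum G y U - c * rowSum G g U := fun U => by
    rw [rowSum_sub, rowSum_smul]
  refine hmin (y - c • g) (sub_ne_zero.mpr (hy c)) (ssubset_iff_subset_not_subset.mpr ⟨?_, ?_⟩)
  · rintro U ⟨hU, hyU⟩
    refine ⟨hU, fun hgU => hyU ?_⟩
    have : rowSum G y U = 0 := by_contra fun h => (hsub ⟨hU, h⟩).2 hgU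
    rw [hrow, this, hgU, mul_zero, sub_zero]
  · intro h
    exact (h ⟨hU₀, hgU₀⟩).2 (by rw [hrow, div_mul_cancel₀ _ hgU₀, sub_self])

lemma not_isCircuit_of_rowSum_ne_zero {g : G.edgeSet → ℝ} {f f₁ : G.edgeSet} (hf₁ : f₁ ≠ f)
    (hgf₁ : g f₁ ≠ 0) (hrow : ∀ U : Finset V, (∀ v ∈ f.1, v ∈ U) → rowSum G g U ≠ 0) :
    ¬IsCircuit G g := by
  refine not_isCircuit_of_bsupp_subset (y := unitVec G f) ?_ (fun c h => ?_)
    ⟨f.1.toFinset, nonempty_iff_ne_empty.mpr (Sym2.toFinset_ne_empty _),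
      hrow _ fun v => Sym2.mem_toFinset.mpr⟩
  · rintro U ⟨hU, hfU⟩
    rw [rowSum_unitVec, ite_ne_right_iff] at hfU
    exact ⟨hU, hrow U hfU.1⟩
  · have atf := congrFun h f
    have atf₁ := congrFun h f₁
    simp only [unitVec, Pi.smul_apply, smul_eq_mul, if_pos, if_neg hf₁] at atf atf₁
    rcases mul_eq_zero.mp atf₁.symm with rfl | h
    · simp at atf
    · exact hgf₁ h

lemma rowSum_pos_of_nonneg {g : G.edgeSet → ℝ} (hg : ∀ e, 0 ≤ g e) {f : G.edgeSet}
    (hf : 0 < g f) {U : Finset V} (hfU : ∀ v ∈ f.1, v ∈ U) : 0 < rowSum G g U :=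
  sum_pos' (fun e _ => by split_ifs <;> simp [hg e]) ⟨f, mem_univ f, by rwa [if_pos hfU]⟩

lemma IsCircuit.eq_smul_unitVec_of_nonneg {g : G.edgeSet → ℝ} (hg : IsCircuit G g)
    (hnn : ∀ e, 0 ≤ g e) : ∃ e, g = g e • unitVec G e := by
  obtain ⟨e, hge⟩ := Function.ne_iff.mp hg.1
  have hpos : 0 < g e := (hnn e).lt_of_ne' hge
  refine ⟨e, funext fun f => ?_⟩
  by_cases hfe : f = e
  · simp [hfe, unitVec]
  · have : g f = 0 := by_contra fun hgf => not_isCircuit_of_rowSum_ne_zero hfe hgf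
      (fun U hU => (rowSum_pos_of_nonneg hnn hpos hU).ne') hg
    simp [this, hfe, unitVec]

lemma le_one_of_smul_unitVec_mem_MWF {c : ℝ} {e : G.edgeSet} (h : c • unitVec G e ∈ MWF G) :
    c ≤ 1 := by
  have := h.2 e.1.toFinset (nonempty_iff_ne_empty.mpr (Sym2.toFinset_ne_empty _))
  rw [rowSum_smul, rowSum_unitVec, if_pos fun v => Sym2.mem_toFinset.mpr,
    Sym2.card_toFinset_of_not_isDiag _ (G.not_isDiag_of_mem_edgeSet e.2)] at this
  norm_num at this
  exact this

lemma rowSum_chiVec_sub_smul_unitVec_pos {F : Finset G.edgeSet} {e₁ f : G.edgeSet} {c : ℝ}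
    (hc : c < 2) (hf : f ∈ F) {U : Finset V} (hfU : ∀ v ∈ f.1, v ∈ U)
    (hsecond : (∀ v ∈ e₁.1, v ∈ U) → ∃ f₀ ∈ F, f₀ ≠ f ∧ ∀ v ∈ f₀.1, v ∈ U) :
    0 < rowSum G (chiVec G F - c • unitVec G e₁) U := by
  rw [rowSum_sub, rowSum_smul, rowSum_unitVec, rowSum_chiVec]
  have hfS : f ∈ {e ∈ F | ∀ v ∈ e.1, v ∈ U} := mem_filter.mpr ⟨hf, hfU⟩
  split_ifs with he₁U
  · obtain ⟨f₀, hf₀, hf₀f, hf₀U⟩ := hsecond he₁U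
    have : 1 < #{e ∈ F | ∀ v ∈ e.1, v ∈ U} :=
      one_lt_card.mpr ⟨f, hfS, f₀, mem_filter.mpr ⟨hf₀, hf₀U⟩, hf₀f.symm⟩
    have : (2 : ℝ) ≤ #{e ∈ F | ∀ v ∈ e.1, v ∈ U} := by exact_mod_cast this
    linarith
  · have : (1 : ℝ) ≤ #{e ∈ F | ∀ v ∈ e.1, v ∈ U} := by
      exact_mod_cast card_pos.mpr ⟨f, hfS⟩
    linarith

lemma not_isCircuit_chiVec_sub_smul_unitVec_of_exists_second_edge {F : Finset G.edgeSet}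
    {e₁ f f₁ : G.edgeSet} {c : ℝ} (hc : c < 2) (hf : f ∈ F) (hf₁ : f₁ ∈ F) (hf₁f : f₁ ≠ f)
    (hf₁e₁ : f₁ ≠ e₁)
    (hsecond : ∀ U : Finset V, (∀ v ∈ f.1, v ∈ U) → (∀ v ∈ e₁.1, v ∈ U) →
      ∃ f₀ ∈ F, f₀ ≠ f ∧ ∀ v ∈ f₀.1, v ∈ U) :
    ¬IsCircuit G (chiVec G F - c • unitVec G e₁) :=
  not_isCircuit_of_rowSum_ne_zero hf₁f (by simp [chiVec, unitVec, hf₁, hf₁e₁])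
    fun U hfU => (rowSum_chiVec_sub_smul_unitVec_pos hc hf hfU (hsecond U hfU)).ne'

/-- If `e₁ ∈ F`, any two further edges of `F` serve as `f` and `f₁`. Otherwise the `F`-path
between the endpoints `u, v` of `e₁` starts with edges `f₁ = ub`, `f = bc`, and every `U`
containing `f` and `e₁` also contains `f₁`. -/
lemma not_isCircuit_chiVec_sub_smul_unitVec {F : Finset G.edgeSet} (hF : 3 ≤ #F)
    (hspan : ∀ u v, G.Adj u v → (edgeSub G F).Reachable u v) (e₁ : G.edgeSet) {c : ℝ}
    (hc : c < 2) : ¬IsCircuit G (chiVec G F - c • unitVec G e₁) := by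
  by_cases he₁ : e₁ ∈ F
  · have : 1 < #(F.erase e₁) := by rw [card_erase_of_mem he₁]; omega
    obtain ⟨f, hf, f₁, hf₁, hf₁f⟩ := one_lt_card.mp this
    exact not_isCircuit_chiVec_sub_smul_unitVec_of_exists_second_edge hc (mem_of_mem_erase hf)
      (mem_of_mem_erase hf₁) hf₁f.symm (ne_of_mem_erase hf₁)
      fun U _ he₁U => ⟨e₁, he₁, (ne_of_mem_erase hf).symm, he₁U⟩
  · obtain ⟨⟨u, v⟩, huv⟩ := Quot.exists_rep e₁.1
    have hadj : G.Adj u v := by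
      rw [← SimpleGraph.mem_edgeSet]
      exact (congrArg (· ∈ G.edgeSet) huv).mpr e₁.2
    have hnadj : ¬(edgeSub G F).Adj u v := fun ⟨_, f, hf, hfuv⟩ =>
      he₁ (Subtype.ext (hfuv.trans huv) ▸ hf)
    obtain ⟨b, c', huc', ⟨-, f₁, hf₁, hf₁ub⟩, hbc', f, hf, hfbc'⟩ :=
      (hspan u v hadj).exists_adj_adj_of_not_adj hadj.ne hnadj
    have hf₁f : f₁ ≠ f := fun h => by
      rcases Sym2.eq_iff.mp (hf₁ub.symm.trans (congrArg Subtype.val h ▸ hfbc')) with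
        ⟨-, h'⟩ | ⟨h', -⟩
      exacts [hbc' h', huc' h']
    refine not_isCircuit_chiVec_sub_smul_unitVec_of_exists_second_edge hc hf hf₁ hf₁f
      (ne_of_mem_of_not_mem hf₁ he₁) fun U hfU he₁U => ⟨f₁, hf₁, hf₁f, ?_⟩
    rw [hf₁ub, Sym2.forall_mem_pair]
    exact ⟨he₁U u (huv ▸ Sym2.mem_mk_left u v), hfU b (hfbc' ▸ Sym2.mem_mk_left b c')⟩

end

theorem stmt18_general {V : Type*} [Fintype V] [DecidableEq V] (G : SimpleGraph V)
    [DecidableRel G.Adj]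
    (F : Finset G.edgeSet) (hF : 3 ≤ F.card)
    (hspan : ∀ u v : V, G.Reachable u v → (edgeSub G (↑F : Set G.edgeSet)).Reachable u v) :
    ∀ (k : ℕ) (x : Fin (k + 1) → G.edgeSet → ℝ),
      IsCircuitWalk G k x → x 0 = 0 → x (Fin.last k) = chiVec G F → 3 ≤ k := by
  intro k x hwalk h0 hlast
  have not_circuit := not_isCircuit_chiVec_sub_smul_unitVec hF fun u v h => hspan u v h.reachable
  obtain ⟨f, hf⟩ : F.Nonempty := card_pos.mp (by omega)
  by_contra! hk
  interval_cases k
  · have := congrFun (h0.symm.trans hlast) f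
    simp [chiVec, hf] at this
  · have := hwalk.isCircuit_sub 0
    simp only [Fin.succ_zero_eq_one, Fin.castSucc_zero, h0] at this
    exact not_circuit f (c := 0) (by norm_num) (by simpa [← hlast] using this)
  · obtain ⟨e₁, hx₁⟩ := (by simpa [h0] using hwalk.isCircuit_sub 0 :
      IsCircuit G (x 1)).eq_smul_unitVec_of_nonneg (hwalk.1 1).1
    have hc : x 1 e₁ ≤ 1 := le_one_of_smul_unitVec_mem_MWF (hx₁ ▸ hwalk.1 1)
    have := hwalk.isCircuit_sub 1
    rw [show (1 : Fin 2).succ = Fin.last 2 from rfl, hlast,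
      show (1 : Fin 2).castSucc = 1 from rfl, hx₁] at this
    exact not_circuit e₁ (by linarith) this

/-- For a graph on at least 4 vertices with a spanning forest `F` of at least 3 edges,
every circuit walk in the maximum weight forest polytope from the zero vector to the
characteristic vector of `F` has length at least 3; hence the circuit diameter is at
least 3. -/
theorem stmt18 {V : Type*} [Fintype V] [DecidableEq V] (G : SimpleGraph V)
    [DecidableRel G.Adj] (hV : 4 ≤ Fintype.card V)
    (F : Finset G.edgeSet) (hF : 3 ≤ F.card)
    (hforest : (edgeSub G (↑F : Set G.edgeSet)).IsAcyclic)
    (hspan : ∀ u v : V, G.Reachable u v → (edgeSub G (↑F : Set G.edgeSet)).Reachable u v) :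
    ∀ (k : ℕ) (x : Fin (k + 1) → G.edgeSet → ℝ),
      IsCircuitWalk G k x → x 0 = 0 → x (Fin.last k) = chiVec G F → 3 ≤ k :=
  stmt18_general G F hF hspan
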